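/- arXiv:1306.0439 — 4 statements merged into one kernel-verified Lean document; each statement's English description precedes it below -/
import Mathlib

section
/- If Q(x) = Q(x)* and s(x) = s(x)* for almost every x ∈ ℝ (self-adjoint matrix potential), then the preminimal operator is symmetric: for all (u,f) ∈ G00 and (w,g) ∈ G00, ⟨f,w⟩ = ⟨u,g⟩. In particular the minimal operator L0 (whose graph is the closure of G00) is symmetric. -/
open MeasureTheory Matrix Filter Topology

noncomputable section

abbrev Em (m : ℕ) := EuclideanSpace ℂ (Fin m)

/-- Matrix action on `ℂ^m`. -/
def mv (m : ℕ) (A : Matrix (Fin m) (Fin m) ℂ) (x : Em m) : Em m := WithLp.toLp 2 (A.mulVec x)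

/-- `(u,u1)` is an l-pair with output `f` for the Shin–Zettl data `(Q,s)`. -/
def IsLpair (m : ℕ) (Q s : ℝ → Matrix (Fin m) (Fin m) ℂ)
    (u u1 f : ℝ → Em m) : Prop :=
  LocallyIntegrable f volume ∧ Continuous u ∧ Continuous u1 ∧
  (∀ a x : ℝ, u x = u a + ∫ t in a..x, (mv m (Q t) (u t) + u1 t)) ∧
  (∀ a x : ℝ, u1 x = u1 a +
     ∫ t in a..x, (mv m (s t - Q t ^ 2) (u t) - mv m (Q t) (u1 t) - f t))

/-- `(v,v1)` is an l⁺-pair with output `g`: same with `Q,s` replaced by their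
conjugate transposes. -/
def IsLplusPair (m : ℕ) (Q s : ℝ → Matrix (Fin m) (Fin m) ℂ)
    (v v1 g : ℝ → Em m) : Prop :=
  IsLpair m (fun t => (Q t)ᴴ) (fun t => (s t)ᴴ) v v1 g

/-- `Q` is locally square-integrable (entrywise). -/
def LocL2 (m : ℕ) (Q : ℝ → Matrix (Fin m) (Fin m) ℂ) : Prop :=
  ∀ i j : Fin m, ∀ K : Set ℝ, IsCompact K →
    MemLp (fun x => Q x i j) 2 (volume.restrict K)

/-- `s` is locally integrable (entrywise). -/
def LocL1 (m : ℕ) (s : ℝ → Matrix (Fin m) (Fin m) ℂ) : Prop :=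
  ∀ i j : Fin m, LocallyIntegrable (fun x => s x i j) volume

/-- The `ℂ^m` inner product `(a,b) = ∑ i, aᵢ * conj bᵢ`. -/
def dotc (m : ℕ) (a b : Em m) : ℂ := ∑ i, a i * (starRingEnd ℂ) (b i)

/-- `⟨u,v⟩ = ∫ (u(x), v(x)) dx`. -/
def pairing (m : ℕ) (u v : ℝ → Em m) : ℂ := ∫ x : ℝ, dotc m (u x) (v x)

abbrev L2m (m : ℕ) := Lp (Em m) 2 (volume : Measure ℝ)

/-- The maximal graph `G`. -/
def Gmax (m : ℕ) (Q s : ℝ → Matrix (Fin m) (Fin m) ℂ) : Set (L2m m × L2m m) :=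
  {p | ∃ u u1 f : ℝ → Em m, IsLpair m Q s u u1 f ∧
        u =ᵐ[volume] p.1 ∧ f =ᵐ[volume] p.2}

/-- The preminimal graph `G₀₀`. -/
def G00 (m : ℕ) (Q s : ℝ → Matrix (Fin m) (Fin m) ℂ) : Set (L2m m × L2m m) :=
  {p | ∃ u u1 f : ℝ → Em m, IsLpair m Q s u u1 f ∧ HasCompactSupport u ∧
        u =ᵐ[volume] p.1 ∧ f =ᵐ[volume] p.2}

/-- The maximal graph `G⁺`. -/
def GmaxPlus (m : ℕ) (Q s : ℝ → Matrix (Fin m) (Fin m) ℂ) : Set (L2m m × L2m m) :=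
  {p | ∃ v v1 g : ℝ → Em m, IsLplusPair m Q s v v1 g ∧
        v =ᵐ[volume] p.1 ∧ g =ᵐ[volume] p.2}

/-- The preminimal graph `G₀₀⁺`. -/
def G00Plus (m : ℕ) (Q s : ℝ → Matrix (Fin m) (Fin m) ℂ) : Set (L2m m × L2m m) :=
  {p | ∃ v v1 g : ℝ → Em m, IsLplusPair m Q s v v1 g ∧ HasCompactSupport v ∧
        v =ᵐ[volume] p.1 ∧ g =ᵐ[volume] p.2}

/-! For l-pairs `(u, u1)` with output `f` and `(w, w1)` with output `g`, self-adjointness of `Q`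
and `s` makes `(f, w) - (u, g)` the a.e. derivative of the bracket `(u, w1) - (u1, w)` (Lagrange's
identity). The product rule for primitives of integrable functions, proved by Fubini on the
triangle `a < τ < t < b`, integrates this over an interval containing both supports, where the
bracket vanishes at the endpoints. Symmetry passes to the closure of `G00` because both sides are
continuous in the `L²` topology. -/

open Set

section ProductRule

variable {𝕜 : Type*} [RCLike 𝕜] {a b : ℝ}

theorem integral_mul_integral_Ioc_eq_add {P R : ℝ → 𝕜} (hP : IntegrableOn P (Ioc a b))
    (hR : IntegrableOn R (Ioc a b)) :
    IntegrableOn (fun t => P t * ∫ τ in Ioc a t, R τ) (Ioc a b) ∧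
    IntegrableOn (fun τ => (∫ t in Ioc a τ, P t) * R τ) (Ioc a b) ∧
    (∫ t in Ioc a b, P t) * (∫ τ in Ioc a b, R τ) =
      (∫ t in Ioc a b, P t * ∫ τ in Ioc a t, R τ) +
        ∫ τ in Ioc a b, (∫ t in Ioc a τ, P t) * R τ := by
  set μ := volume.restrict (Ioc a b)
  set F : ℝ × ℝ → 𝕜 := fun z => P z.1 * R z.2
  set S : Set (ℝ × ℝ) := {z | z.2 < z.1}
  have hS : MeasurableSet S := measurableSet_lt measurable_snd measurable_fst
  have hF : Integrable F (μ.prod μ) := hP.mul_prod hR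
  have hbelow : (fun t => ∫ τ, S.indicator F (t, τ) ∂μ)
      =ᵐ[μ] fun t => P t * ∫ τ in Ioc a t, R τ := by
    filter_upwards [ae_restrict_mem measurableSet_Ioc] with t ht
    have hind : (fun τ => S.indicator F (t, τ)) = (Iio t).indicator fun τ => P t * R τ := by
      ext τ; simp [S, F, indicator_apply]
    have hIoo : Ioc a b ∩ Iio t = Ioo a t := by
      ext τ; simp only [mem_inter_iff, mem_Ioc, mem_Iio, mem_Ioo]
      grind [ht.2]
    rw [hind, setIntegral_indicator measurableSet_Iio, hIoo,
      ← integral_Ioc_eq_integral_Ioo, integral_const_mul]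
  have habove : (fun τ => ∫ t, Sᶜ.indicator F (t, τ) ∂μ)
      =ᵐ[μ] fun τ => (∫ t in Ioc a τ, P t) * R τ := by
    filter_upwards [ae_restrict_mem measurableSet_Ioc] with τ hτ
    have hind : (fun t => Sᶜ.indicator F (t, τ)) = (Iic τ).indicator fun t => P t * R τ := by
      ext t; simp [S, F, indicator_apply]
    rw [hind, setIntegral_indicator measurableSet_Iic, Ioc_inter_Iic, min_eq_right hτ.2,
      integral_mul_const]
  have hFS := hF.indicator hS
  have hFSc := hF.indicator hS.compl
  refine ⟨hFS.integral_prod_left.congr hbelow, hFSc.integral_prod_right.congr habove, ?_⟩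
  calc (∫ t in Ioc a b, P t) * (∫ τ in Ioc a b, R τ)
      = ∫ z, (S.indicator F z + Sᶜ.indicator F z) ∂μ.prod μ := by
        simp_rw [indicator_self_add_compl_apply]; exact (integral_prod_mul P R).symm
    _ = _ := by
        rw [integral_add hFS hFSc, integral_prod _ hFS, integral_prod_symm _ hFSc,
          integral_congr_ae hbelow, integral_congr_ae habove]

theorem integral_mul_add_mul_eq_sub {P R U W : ℝ → 𝕜} (hab : a ≤ b)
    (hP : IntegrableOn P (Ioc a b)) (hR : IntegrableOn R (Ioc a b))
    (hU : ∀ x ∈ Icc a b, U x = U a + ∫ t in Ioc a x, P t)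
    (hW : ∀ x ∈ Icc a b, W x = W a + ∫ t in Ioc a x, R t) :
    IntegrableOn (fun t => P t * W t + U t * R t) (Ioc a b) ∧
    ∫ t in Ioc a b, (P t * W t + U t * R t) = U b * W b - U a * W a := by
  obtain ⟨hPR, hPR', hfubini⟩ := integral_mul_integral_Ioc_eq_add hP hR
  have hPW : (fun t => P t * W t) =ᵐ[volume.restrict (Ioc a b)]
      fun t => P t * W a + P t * ∫ τ in Ioc a t, R τ := by
    filter_upwards [ae_restrict_mem measurableSet_Ioc] with t ht
    rw [hW t (Ioc_subset_Icc_self ht), mul_add]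
  have hUR : (fun t => U t * R t) =ᵐ[volume.restrict (Ioc a b)]
      fun t => U a * R t + (∫ τ in Ioc a t, P τ) * R t := by
    filter_upwards [ae_restrict_mem measurableSet_Ioc] with t ht
    rw [hU t (Ioc_subset_Icc_self ht), add_mul]
  have hPW_int : IntegrableOn (fun t => P t * W t) (Ioc a b) :=
    ((hP.mul_const _).add hPR).congr hPW.symm
  have hUR_int : IntegrableOn (fun t => U t * R t) (Ioc a b) :=
    ((hR.const_mul _).add hPR').congr hUR.symm
  refine ⟨hPW_int.add hUR_int, ?_⟩
  rw [integral_add hPW_int hUR_int, integral_congr_ae hPW, integral_congr_ae hUR,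
    integral_add (hP.mul_const _) hPR, integral_add (hR.const_mul _) hPR', integral_mul_const,
    integral_const_mul, hU b ⟨hab, le_rfl⟩, hW b ⟨hab, le_rfl⟩]
  linear_combination -hfubini

end ProductRule

section Coordinates

variable {m : ℕ} {a b : ℝ}

theorem apply_eq_add_integral_Ioc {P U : ℝ → Em m} (hP : IntegrableOn P (Ioc a b))
    (hU : ∀ x, U x = U a + ∫ t in a..x, P t) (i : Fin m) :
    ∀ x ∈ Icc a b, U x i = U a i + ∫ t in Ioc a x, P t i := by
  intro x hx
  have hPx : ∀ j, IntegrableOn (fun t => P t j) (Ioc a x) :=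
    integrable_piLp_iff.1 (hP.mono_set (Ioc_subset_Ioc_right hx.2))
  rw [hU x, intervalIntegral.integral_of_le hx.1, PiLp.add_apply, eval_integral_piLp hPx]

theorem integrableOn_conj_apply {F : ℝ → Em m} {S : Set ℝ} (hF : IntegrableOn F S)
    (i : Fin m) :
    IntegrableOn (fun t => (starRingEnd ℂ) (F t i)) S :=
  (RCLike.conjCLE (K := ℂ)).toContinuousLinearMap.integrable_comp (integrable_piLp_iff.1 hF i)

theorem integral_dotc_add_dotc_eq_sub {P R U W : ℝ → Em m} (hab : a ≤ b)
    (hP : IntegrableOn P (Ioc a b)) (hR : IntegrableOn R (Ioc a b))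
    (hU : ∀ x, U x = U a + ∫ t in a..x, P t) (hW : ∀ x, W x = W a + ∫ t in a..x, R t) :
    IntegrableOn (fun t => dotc m (P t) (W t) + dotc m (U t) (R t)) (Ioc a b) ∧
    ∫ t in Ioc a b, (dotc m (P t) (W t) + dotc m (U t) (R t)) =
      dotc m (U b) (W b) - dotc m (U a) (W a) := by
  have hcoord : ∀ i, IntegrableOn (fun t => P t i * (starRingEnd ℂ) (W t i) +
        U t i * (starRingEnd ℂ) (R t i)) (Ioc a b) ∧
      ∫ t in Ioc a b, (P t i * (starRingEnd ℂ) (W t i) + U t i * (starRingEnd ℂ) (R t i)) =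
        U b i * (starRingEnd ℂ) (W b i) - U a i * (starRingEnd ℂ) (W a i) := by
    intro i
    refine integral_mul_add_mul_eq_sub hab (integrable_piLp_iff.1 hP i)
      (integrableOn_conj_apply hR i) (apply_eq_add_integral_Ioc hP hU i) fun x hx => ?_
    rw [apply_eq_add_integral_Ioc hR hW i x hx, map_add, integral_conj]
  have hsum : ∀ t, dotc m (P t) (W t) + dotc m (U t) (R t) =
      ∑ i, (P t i * (starRingEnd ℂ) (W t i) + U t i * (starRingEnd ℂ) (R t i)) := fun t => by
    simp only [dotc, Finset.sum_add_distrib]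
  simp only [hsum]
  refine ⟨integrable_finsetSum _ fun i _ => (hcoord i).1, ?_⟩
  rw [integral_finsetSum _ fun i _ => (hcoord i).1]
  simp only [(hcoord _).2, dotc, Finset.sum_sub_distrib]

end Coordinates

section Integrability

variable {m : ℕ} {K : Set ℝ}

theorem LocL2.integrableOn_apply {Q : ℝ → Matrix (Fin m) (Fin m) ℂ} (hQ : LocL2 m Q)
    (hK : IsCompact K) (i j : Fin m) : IntegrableOn (fun t => Q t i j) K :=
  have : IsFiniteMeasure (volume.restrict K) := isFiniteMeasure_restrict.2 hK.measure_ne_top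
  (hQ i j K hK).integrable one_le_two

theorem LocL2.integrableOn_sq_apply {Q : ℝ → Matrix (Fin m) (Fin m) ℂ} (hQ : LocL2 m Q)
    (hK : IsCompact K) (i j : Fin m) : IntegrableOn (fun t => (Q t ^ 2) i j) K := by
  simp only [sq, Matrix.mul_apply]
  exact integrable_finsetSum _ fun k _ => (hQ i k K hK).integrable_mul (hQ k j K hK)

theorem integrableOn_mv {A : ℝ → Matrix (Fin m) (Fin m) ℂ} {v : ℝ → Em m}
    (hK : IsCompact K) (hA : ∀ i j, IntegrableOn (fun t => A t i j) K) (hv : Continuous v) :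
    IntegrableOn (fun t => mv m (A t) (v t)) K := by
  refine integrable_piLp_iff.2 fun i => ?_
  simp only [mv, PiLp.toLp_apply, Matrix.mulVec, dotProduct]
  exact integrable_finsetSum _ fun j _ => (hA i j).mul_continuousOn (by fun_prop) hK

theorem integrableOn_dotc_left {F v : ℝ → Em m} (hK : IsCompact K) (hF : IntegrableOn F K)
    (hv : Continuous v) : IntegrableOn (fun t => dotc m (F t) (v t)) K :=
  integrable_finsetSum _ fun i _ =>
    IntegrableOn.mul_continuousOn (integrable_piLp_iff.1 hF i) (by fun_prop) hK

theorem integrableOn_dotc_right {F v : ℝ → Em m} (hK : IsCompact K) (hF : IntegrableOn F K)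
    (hv : Continuous v) : IntegrableOn (fun t => dotc m (v t) (F t)) K :=
  integrable_finsetSum _ fun i _ =>
    (integrableOn_conj_apply hF i).continuousOn_mul (by fun_prop) hK

theorem IsLpair.integrableOn_integrands {Q s : ℝ → Matrix (Fin m) (Fin m) ℂ}
    {u u1 f : ℝ → Em m} (hl : IsLpair m Q s u u1 f) (hQ : LocL2 m Q) (hs : LocL1 m s)
    (hK : IsCompact K) :
    IntegrableOn (fun t => mv m (Q t) (u t) + u1 t) K ∧
    IntegrableOn (fun t => mv m (s t - Q t ^ 2) (u t) - mv m (Q t) (u1 t) - f t) K := by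
  obtain ⟨hf, hu, hu1, -, -⟩ := hl
  have hQK := hQ.integrableOn_apply hK
  refine ⟨(integrableOn_mv hK hQK hu).add (hu1.continuousOn.integrableOn_compact hK), ?_⟩
  refine ((integrableOn_mv hK (fun i j => ?_) hu).sub (integrableOn_mv hK hQK hu1)).sub
    (hf.integrableOn_isCompact hK)
  exact ((hs i j).integrableOn_isCompact hK).sub (hQ.integrableOn_sq_apply hK i j)

end Integrability

section Lagrange

variable {m : ℕ}

theorem dotc_eq_inner (x y : Em m) : dotc m x y = inner ℂ y x := by
  simp [dotc, PiLp.inner_apply]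

theorem inner_mv (A : Matrix (Fin m) (Fin m) ℂ) (x y : Em m) :
    inner ℂ y (mv m A x) = inner ℂ (mv m Aᴴ y) x := by
  simp only [PiLp.inner_apply, mv, Matrix.mulVec, dotProduct,
    RCLike.inner_apply, Matrix.conjTranspose_apply, map_sum, map_mul, Finset.mul_sum,
    Finset.sum_mul, RCLike.star_def, RCLike.conj_conj]
  rw [Finset.sum_comm]
  exact Finset.sum_congr rfl fun i _ => Finset.sum_congr rfl fun j _ => by ring

theorem dotc_lagrange_identity {Q s : Matrix (Fin m) (Fin m) ℂ} (hQ : Qᴴ = Q) (hs : sᴴ = s)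
    (u u1 f w w1 g : Em m) :
    dotc m (mv m Q u + u1) w1 + dotc m u (mv m (s - Q ^ 2) w - mv m Q w1 - g) -
        (dotc m (mv m (s - Q ^ 2) u - mv m Q u1 - f) w + dotc m u1 (mv m Q w + w1)) =
      dotc m f w - dotc m u g := by
  have hsQ : (s - Q ^ 2)ᴴ = s - Q ^ 2 := by
    rw [Matrix.conjTranspose_sub, hs, Matrix.conjTranspose_pow, hQ]
  simp only [dotc_eq_inner, inner_add_left, inner_sub_left, inner_add_right, inner_sub_right,
    inner_mv, hQ, hsQ]
  ring

end Lagrange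

theorem IsCompact.exists_subset_Ioo {K : Set ℝ} (hK : IsCompact K) :
    ∃ a b, a ≤ b ∧ K ⊆ Ioo a b := by
  obtain ⟨r, hr, hKr⟩ := hK.isBounded.subset_closedBall_lt 0 0
  refine ⟨-r - 1, r + 1, by linarith, hKr.trans ?_⟩
  rw [Real.closedBall_eq_Icc]
  exact Icc_subset_Ioo (by linarith) (by linarith)

section Green

variable {m : ℕ} {Q s : ℝ → Matrix (Fin m) (Fin m) ℂ} {u u1 f w w1 g : ℝ → Em m}

theorem IsLpair.integral_Ioc_dotc_sub_dotc (hlu : IsLpair m Q s u u1 f)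
    (hlw : IsLpair m Q s w w1 g) (hQ : LocL2 m Q) (hs : LocL1 m s)
    (hQsa : ∀ᵐ t : ℝ ∂volume, (Q t)ᴴ = Q t)
    (hssa : ∀ᵐ t : ℝ ∂volume, (s t)ᴴ = s t)
    {a b : ℝ} (hab : a ≤ b) :
    ∫ t in Ioc a b, (dotc m (f t) (w t) - dotc m (u t) (g t)) =
      (dotc m (u b) (w1 b) - dotc m (u1 b) (w b)) -
        (dotc m (u a) (w1 a) - dotc m (u1 a) (w a)) := by
  obtain ⟨hu', hu1'⟩ := hlu.integrableOn_integrands hQ hs (isCompact_Icc (a := a) (b := b))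
  obtain ⟨hw', hw1'⟩ := hlw.integrableOn_integrands hQ hs (isCompact_Icc (a := a) (b := b))
  obtain ⟨-, -, -, hu, hu1⟩ := hlu
  obtain ⟨-, -, -, hw, hw1⟩ := hlw
  obtain ⟨hint₁, heq₁⟩ := integral_dotc_add_dotc_eq_sub hab
    (hu'.mono_set Ioc_subset_Icc_self) (hw1'.mono_set Ioc_subset_Icc_self) (hu a) (hw1 a)
  obtain ⟨hint₂, heq₂⟩ := integral_dotc_add_dotc_eq_sub hab
    (hu1'.mono_set Ioc_subset_Icc_self) (hw'.mono_set Ioc_subset_Icc_self) (hu1 a) (hw a)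
  have hlagrange : (fun t => dotc m (f t) (w t) - dotc m (u t) (g t))
      =ᵐ[volume.restrict (Ioc a b)] fun t => (dotc m (mv m (Q t) (u t) + u1 t) (w1 t) +
          dotc m (u t) (mv m (s t - Q t ^ 2) (w t) - mv m (Q t) (w1 t) - g t)) -
        (dotc m (mv m (s t - Q t ^ 2) (u t) - mv m (Q t) (u1 t) - f t) (w t) +
          dotc m (u1 t) (mv m (Q t) (w t) + w1 t)) := by
    filter_upwards [ae_restrict_of_ae hQsa, ae_restrict_of_ae hssa] with t hQt hst
    exact (dotc_lagrange_identity hQt hst _ _ _ _ _ _).symm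
  rw [integral_congr_ae hlagrange, integral_sub hint₁ hint₂, heq₁, heq₂]
  ring

theorem IsLpair.pairing_eq_of_hasCompactSupport (hlu : IsLpair m Q s u u1 f)
    (hlw : IsLpair m Q s w w1 g) (hQ : LocL2 m Q) (hs : LocL1 m s)
    (hQsa : ∀ᵐ t : ℝ ∂volume, (Q t)ᴴ = Q t)
    (hssa : ∀ᵐ t : ℝ ∂volume, (s t)ᴴ = s t)
    (hcu : HasCompactSupport u) (hcw : HasCompactSupport w) :
    pairing m f w = pairing m u g := by
  obtain ⟨a, b, hab, hsupp⟩ := IsCompact.exists_subset_Ioo (hcu.union hcw)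
  have hu0 : ∀ x ∉ Ioo a b, u x = 0 := fun x hx =>
    image_eq_zero_of_notMem_tsupport fun h => hx (hsupp (Or.inl h))
  have hw0 : ∀ x ∉ Ioo a b, w x = 0 := fun x hx =>
    image_eq_zero_of_notMem_tsupport fun h => hx (hsupp (Or.inr h))
  have hfw : pairing m f w = ∫ t in Ioc a b, dotc m (f t) (w t) :=
    (setIntegral_eq_integral_of_forall_compl_eq_zero fun x hx => by
      simp [hw0 x fun h => hx (Ioo_subset_Ioc_self h), dotc]).symm
  have hug : pairing m u g = ∫ t in Ioc a b, dotc m (u t) (g t) :=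
    (setIntegral_eq_integral_of_forall_compl_eq_zero fun x hx => by
      simp [hu0 x fun h => hx (Ioo_subset_Ioc_self h), dotc]).symm
  have hgreen := hlu.integral_Ioc_dotc_sub_dotc hlw hQ hs hQsa hssa hab
  obtain ⟨hf, hucont, -⟩ := hlu
  obtain ⟨hg, hwcont, -⟩ := hlw
  have hint_fw : IntegrableOn (fun t => dotc m (f t) (w t)) (Ioc a b) :=
    (integrableOn_dotc_left isCompact_Icc (hf.integrableOn_isCompact isCompact_Icc)
      hwcont).mono_set Ioc_subset_Icc_self
  have hint_ug : IntegrableOn (fun t => dotc m (u t) (g t)) (Ioc a b) :=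
    (integrableOn_dotc_right isCompact_Icc (hg.integrableOn_isCompact isCompact_Icc)
      hucont).mono_set Ioc_subset_Icc_self
  rw [hfw, hug, ← sub_eq_zero, ← integral_sub hint_fw hint_ug,
    hgreen, hu0 a (by simp), hu0 b (by simp), hw0 a (by simp), hw0 b (by simp)]
  simp [dotc]

end Green

theorem pairing_congr_ae {m : ℕ} {u u' v v' : ℝ → Em m} (hu : u =ᵐ[volume] u')
    (hv : v =ᵐ[volume] v') : pairing m u v = pairing m u' v' :=
  integral_congr_ae (by filter_upwards [hu, hv] with x hux hvx; rw [hux, hvx])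

theorem pairing_eq_inner {m : ℕ} (x y : L2m m) : pairing m x y = inner ℂ y x := by
  simp [pairing, dotc_eq_inner, L2.inner_def]

theorem inner_fst_snd_eq_of_mem_closure {𝕜 E : Type*} [RCLike 𝕜] [NormedAddCommGroup E]
    [InnerProductSpace 𝕜 E] {G : Set (E × E)}
    (hG : ∀ p ∈ G, ∀ q ∈ G, inner 𝕜 q.1 p.2 = inner 𝕜 q.2 p.1) :
    ∀ p ∈ closure G, ∀ q ∈ closure G, inner 𝕜 q.1 p.2 = inner 𝕜 q.2 p.1 := by
  intro p hp q hq
  have hpq : (p, q) ∈ closure (G ×ˢ G) := by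
    rw [closure_prod_eq]; exact ⟨hp, hq⟩
  have hclosed :
      IsClosed {z : (E × E) × (E × E) | inner 𝕜 z.2.1 z.1.2 = inner 𝕜 z.2.2 z.1.1} :=
    isClosed_eq (by fun_prop) (by fun_prop)
  exact hclosed.closure_subset_iff.2 (fun z hz => hG z.1 hz.1 z.2 hz.2) hpq

theorem stmt1_general (m : ℕ) (Q s : ℝ → Matrix (Fin m) (Fin m) ℂ)
    (hQ : LocL2 m Q) (hs : LocL1 m s)
    (hQsa : ∀ᵐ x : ℝ ∂(volume), (Q x)ᴴ = Q x)
    (hssa : ∀ᵐ x : ℝ ∂(volume), (s x)ᴴ = s x) :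
    (∀ p ∈ G00 m Q s, ∀ q ∈ G00 m Q s,
        pairing m (⇑p.2) (⇑q.1) = pairing m (⇑p.1) (⇑q.2)) ∧
    (∀ p ∈ closure (G00 m Q s), ∀ q ∈ closure (G00 m Q s),
        pairing m (⇑p.2) (⇑q.1) = pairing m (⇑p.1) (⇑q.2)) := by
  have hG00 : ∀ p ∈ G00 m Q s, ∀ q ∈ G00 m Q s,
      pairing m (⇑p.2) (⇑q.1) = pairing m (⇑p.1) (⇑q.2) := by
    rintro p ⟨u, u1, f, hlu, hcu, hup, hfp⟩ q ⟨w, w1, g, hlw, hcw, hwq, hgq⟩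
    rw [← pairing_congr_ae hfp hwq, ← pairing_congr_ae hup hgq]
    exact hlu.pairing_eq_of_hasCompactSupport hlw hQ hs hQsa hssa hcu hcw
  refine ⟨hG00, ?_⟩
  simp only [pairing_eq_inner] at hG00 ⊢
  exact inner_fst_snd_eq_of_mem_closure hG00

/-- With a self-adjoint matrix potential the preminimal operator is symmetric;
in particular so is its closure `L₀`. -/
theorem stmt1 (m : ℕ) (hm : 1 ≤ m) (Q s : ℝ → Matrix (Fin m) (Fin m) ℂ)
    (hQ : LocL2 m Q) (hs : LocL1 m s)
    (hQsa : ∀ᵐ x : ℝ ∂(volume), (Q x)ᴴ = Q x)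
    (hssa : ∀ᵐ x : ℝ ∂(volume), (s x)ᴴ = s x) :
    (∀ p ∈ G00 m Q s, ∀ q ∈ G00 m Q s,
        pairing m (⇑p.2) (⇑q.1) = pairing m (⇑p.1) (⇑q.2)) ∧
    (∀ p ∈ closure (G00 m Q s), ∀ q ∈ closure (G00 m Q s),
        pairing m (⇑p.2) (⇑q.1) = pairing m (⇑p.1) (⇑q.2)) :=
  stmt1_general m Q s hQ hs hQsa hssa
end
end

section
/- Let (u,u1) be an l-pair with output f and (v,v1) an l⁺-pair with output g, and assume u, f, v, g all belong to L²(ℝ,ℂ^m). Then both limits [u,v](+∞) := lim_{t→+∞} [u,v](t) and [u,v](−∞) := lim_{t→−∞} [u,v](t) exist and are finite, where [u,v](t) := (u(t), v1(t)) − (u1(t), v(t)). -/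
open MeasureTheory Matrix Filter Topology

noncomputable section

/-!
Along an l-pair and an l⁺-pair the bracket satisfies the Lagrange identity
`[u,v](y) - [u,v](x) = ∫_x^y ((f,v) - (u,g))`: by the product rule for primitives of locally
integrable functions (proved with Fubini, splitting the square `(a,b]²` into two triangles) the
derivative of `[u,v]` is a combination of the integrands of the two pairs, and every term
carrying `Q` or `s` cancels against its partner because the l⁺-pair is built from `Qᴴ` and `sᴴ`.
Since `u, f, v, g ∈ L²`, the right-hand side is integrable on `ℝ`, so `[u,v]` has limits at `±∞`.
-/

open Set ComplexConjugate

namespace MeasureTheory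

theorem LocallyIntegrable.intervalIntegrable {E : Type*} [NormedAddCommGroup E] {μ : Measure ℝ}
    {f : ℝ → E} (hf : LocallyIntegrable f μ) (a b : ℝ) : IntervalIntegrable f μ a b :=
  (hf.integrableOn_isCompact isCompact_uIcc).intervalIntegrable

end MeasureTheory

theorem ContinuousLinearMap.locallyIntegrable_comp {R E F X : Type*} [NontriviallyNormedField R]
    [NormedAddCommGroup E] [NormedSpace R E] [NormedAddCommGroup F] [NormedSpace R F]
    [MeasurableSpace X] [TopologicalSpace X] {ν : Measure X} (L : E →L[R] F) {f : X → E}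
    (hf : LocallyIntegrable f ν) : LocallyIntegrable (fun x => L (f x)) ν := fun x =>
  let ⟨s, hs, hfs⟩ := hf x
  ⟨s, hs, L.integrable_comp (μ := ν.restrict s) hfs⟩

theorem exists_tendsto_atTop_and_atBot_of_sub_eq_integral {E : Type*} [NormedAddCommGroup E]
    [NormedSpace ℝ E] [CompleteSpace E] {μ : Measure ℝ} {F h : ℝ → E} (hh : Integrable h μ)
    (hF : ∀ x y, x ≤ y → F y - F x = ∫ t in x..y, h t ∂μ) :
    (∃ A, Tendsto F atTop (𝓝 A)) ∧ ∃ B, Tendsto F atBot (𝓝 B) := by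
  constructor
  · refine ⟨F 0 + ∫ t in Ioi 0, h t ∂μ,
      ((intervalIntegral_tendsto_integral_Ioi 0 hh.integrableOn tendsto_id).const_add (F 0)).congr'
        ?_⟩
    filter_upwards [eventually_ge_atTop 0] with y hy
    rw [id, ← hF 0 y hy, add_sub_cancel]
  · refine ⟨F 0 - ∫ t in Iic 0, h t ∂μ,
      ((intervalIntegral_tendsto_integral_Iic 0 hh.integrableOn tendsto_id).const_sub (F 0)).congr'
        ?_⟩
    filter_upwards [eventually_le_atBot 0] with x hx
    rw [id, ← hF x 0 hx, sub_sub_cancel]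

section ProductRule

variable {𝕜 : Type*} [RCLike 𝕜] {μ : Measure ℝ} [NullSingletonClass μ]

theorem continuous_of_forall_eq_add_integral {E : Type*}
    [NormedAddCommGroup E] [NormedSpace ℝ E] {φ F : ℝ → E} (hφ : LocallyIntegrable φ μ) {a : ℝ}
    (hF : ∀ x, F x = F a + ∫ t in a..x, φ t ∂μ) : Continuous F := by
  rw [funext hF]
  exact continuous_const.add (intervalIntegral.continuous_primitive hφ.intervalIntegrable a)

variable [SFinite μ]

theorem setIntegral_Ioc_mul_setIntegral_Ioc_eq_add_triangles {a b : ℝ} {φ ψ : ℝ → 𝕜}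
    (hφ : IntegrableOn φ (Ioc a b) μ) (hψ : IntegrableOn ψ (Ioc a b) μ) :
    (∫ s in Ioc a b, φ s ∂μ) * (∫ t in Ioc a b, ψ t ∂μ) =
      (∫ s in Ioc a b, φ s * ∫ t in Ioc a s, ψ t ∂μ ∂μ) +
        ∫ t in Ioc a b, (∫ s in Ioc a t, φ s ∂μ) * ψ t ∂μ := by
  set ν := μ.restrict (Ioc a b)
  have hprod : Integrable (fun p : ℝ × ℝ => φ p.1 * ψ p.2) (ν.prod ν) := hφ.mul_prod hψ
  have hT : MeasurableSet {p : ℝ × ℝ | p.2 ≤ p.1} := measurableSet_le measurable_snd measurable_fst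
  have lower : ∫ p in {p : ℝ × ℝ | p.2 ≤ p.1}, φ p.1 * ψ p.2 ∂(ν.prod ν)
      = ∫ s in Ioc a b, φ s * ∫ t in Ioc a s, ψ t ∂μ ∂μ := by
    rw [← integral_indicator hT, integral_prod _ (hprod.indicator hT)]
    refine setIntegral_congr_fun measurableSet_Ioc fun s hs => ?_
    have hslice : (fun t => {p : ℝ × ℝ | p.2 ≤ p.1}.indicator (fun p => φ p.1 * ψ p.2) (s, t))
        = (Iic s).indicator (fun t => φ s * ψ t) := by
      ext t; by_cases h : t ≤ s <;> simp [h]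
    rw [hslice, integral_indicator measurableSet_Iic, Measure.restrict_restrict measurableSet_Iic,
      Iic_inter_Ioc_of_le hs.2, integral_const_mul]
  have upper : ∫ p in {p : ℝ × ℝ | p.2 ≤ p.1}ᶜ, φ p.1 * ψ p.2 ∂(ν.prod ν)
      = ∫ t in Ioc a b, (∫ s in Ioc a t, φ s ∂μ) * ψ t ∂μ := by
    rw [← integral_indicator hT.compl, integral_prod_symm _ (hprod.indicator hT.compl)]
    refine setIntegral_congr_fun measurableSet_Ioc fun t ht => ?_
    have hslice : (fun s => {p : ℝ × ℝ | p.2 ≤ p.1}ᶜ.indicator (fun p => φ p.1 * ψ p.2) (s, t))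
        = (Iio t).indicator (fun s => φ s * ψ t) := by
      ext s; by_cases h : s < t <;> simp [h]
    have hIoo : Iio t ∩ Ioc a b = Ioo a t := by
      ext s; simp only [mem_inter_iff, mem_Iio, mem_Ioc, mem_Ioo]; grind
    rw [hslice, integral_indicator measurableSet_Iio, Measure.restrict_restrict measurableSet_Iio,
      hIoo, integral_mul_const, integral_Ioc_eq_integral_Ioo]
  rw [← lower, ← upper, integral_add_compl hT hprod, integral_prod_mul]

theorem integral_mul_integral_eq_add_triangles {a b : ℝ} (hab : a ≤ b)
    {φ ψ : ℝ → 𝕜} (hφ : IntervalIntegrable φ μ a b) (hψ : IntervalIntegrable ψ μ a b) :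
    (∫ s in a..b, φ s ∂μ) * (∫ t in a..b, ψ t ∂μ) =
      (∫ s in a..b, φ s * ∫ t in a..s, ψ t ∂μ ∂μ) +
        ∫ t in a..b, (∫ s in a..t, φ s ∂μ) * ψ t ∂μ := by
  have hIoc : ∀ {x} (χ : ℝ → 𝕜), x ∈ Ioc a b → ∫ t in a..x, χ t ∂μ = ∫ t in Ioc a x, χ t ∂μ :=
    fun χ hx => intervalIntegral.integral_of_le hx.1.le
  simp only [intervalIntegral.integral_of_le hab]
  rw [setIntegral_congr_fun measurableSet_Ioc fun s hs => congrArg (φ s * ·) (hIoc ψ hs),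
    setIntegral_congr_fun measurableSet_Ioc fun t ht => congrArg (· * ψ t) (hIoc φ ht)]
  exact setIntegral_Ioc_mul_setIntegral_Ioc_eq_add_triangles hφ.1 hψ.1

theorem mul_sub_mul_eq_integral_of_eq_add_integral {φ ψ F G : ℝ → 𝕜}
    (hφ : LocallyIntegrable φ μ) (hψ : LocallyIntegrable ψ μ) {a b : ℝ} (hab : a ≤ b)
    (hF : ∀ x, F x = F a + ∫ t in a..x, φ t ∂μ) (hG : ∀ x, G x = G a + ∫ t in a..x, ψ t ∂μ) :
    F b * G b - F a * G a = ∫ t in a..b, (φ t * G t + F t * ψ t) ∂μ := by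
  set Φ := fun x => ∫ t in a..x, φ t ∂μ
  set Ψ := fun x => ∫ t in a..x, ψ t ∂μ
  have hΦ : Continuous Φ := intervalIntegral.continuous_primitive hφ.intervalIntegrable a
  have hΨ : Continuous Ψ := intervalIntegral.continuous_primitive hψ.intervalIntegrable a
  have hsplit : ∀ t, φ t * G t + F t * ψ t
      = (G a * φ t + F a * ψ t) + (φ t * Ψ t + Φ t * ψ t) := fun t => by
    rw [hF t, hG t]; ring
  have hφb := hφ.intervalIntegrable a b
  have hψb := hψ.intervalIntegrable a b
  simp_rw [hsplit]
  rw [intervalIntegral.integral_add ((hφb.const_mul _).add (hψb.const_mul _))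
      ((hφb.mul_continuousOn hΨ.continuousOn).add (hψb.continuousOn_mul hΦ.continuousOn)),
    intervalIntegral.integral_add (hφb.const_mul _) (hψb.const_mul _),
    intervalIntegral.integral_add (hφb.mul_continuousOn hΨ.continuousOn)
      (hψb.continuousOn_mul hΦ.continuousOn),
    intervalIntegral.integral_const_mul, intervalIntegral.integral_const_mul,
    ← integral_mul_integral_eq_add_triangles hab hφb hψb, hF b, hG b]
  ring

end ProductRule

section Euclidean

variable {m : ℕ} {μ : Measure ℝ}

lemma dotc_add_left (x y z : Em m) : dotc m (x + y) z = dotc m x z + dotc m y z := by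
  simp [dotc, add_mul, Finset.sum_add_distrib]

lemma dotc_sub_left (x y z : Em m) : dotc m (x - y) z = dotc m x z - dotc m y z := by
  simp [dotc, sub_mul, Finset.sum_sub_distrib]

lemma dotc_add_right (x y z : Em m) : dotc m x (y + z) = dotc m x y + dotc m x z := by
  simp [dotc, mul_add, Finset.sum_add_distrib]

lemma dotc_sub_right (x y z : Em m) : dotc m x (y - z) = dotc m x y - dotc m x z := by
  simp [dotc, mul_sub, Finset.sum_sub_distrib]

lemma mv_sub (A B : Matrix (Fin m) (Fin m) ℂ) (x : Em m) :
    mv m (A - B) x = mv m A x - mv m B x := by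
  simp [mv, Matrix.sub_mulVec]

lemma dotc_mv_left (A : Matrix (Fin m) (Fin m) ℂ) (x y : Em m) :
    dotc m (mv m A x) y = dotc m x (mv m Aᴴ y) := by
  simp only [dotc, mv, Matrix.mulVec, dotProduct, Matrix.conjTranspose_apply, map_sum, map_mul,
    Finset.sum_mul, Finset.mul_sum, RCLike.star_def, RCLike.conj_conj]
  rw [Finset.sum_comm]
  exact Finset.sum_congr rfl fun i _ => Finset.sum_congr rfl fun j _ => by ring

lemma intervalIntegral_euclidean_apply {Φ : ℝ → Em m} {a b : ℝ}
    (h : IntervalIntegrable Φ μ a b) (i : Fin m) :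
    (∫ t in a..b, Φ t ∂μ) i = ∫ t in a..b, Φ t i ∂μ :=
  ((EuclideanSpace.proj i).intervalIntegral_comp_comm h).symm

namespace MeasureTheory

lemma LocallyIntegrable.euclidean_apply {φ : ℝ → Em m}
    (hφ : LocallyIntegrable φ μ) (i : Fin m) : LocallyIntegrable (fun t => φ t i) μ :=
  (EuclideanSpace.proj (𝕜 := ℂ) i).locallyIntegrable_comp hφ

lemma LocallyIntegrable.conj_euclidean_apply {φ : ℝ → Em m}
    (hφ : LocallyIntegrable φ μ) (i : Fin m) : LocallyIntegrable (fun t => conj (φ t i)) μ :=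
  Complex.conjCLE.toContinuousLinearMap.locallyIntegrable_comp (hφ.euclidean_apply i)

lemma LocallyIntegrable.dotc_continuous {φ G : ℝ → Em m}
    (hφ : LocallyIntegrable φ μ) (hG : Continuous G) :
    LocallyIntegrable (fun t => dotc m (φ t) (G t)) μ :=
  locallyIntegrable_finsetSum _ fun i _ => (hφ.euclidean_apply i).mul_continuous (by fun_prop)

lemma locallyIntegrable_of_euclidean_apply {φ : ℝ → Em m}
    (h : ∀ i, LocallyIntegrable (fun t => φ t i) μ) : LocallyIntegrable φ μ :=
  locallyIntegrable_iff.2 fun _ hK => integrable_piLp_iff.2 fun i => (h i).integrableOn_isCompact hK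

lemma MemLp.integrable_dotc {F G : ℝ → Em m} (hF : MemLp F 2 μ) (hG : MemLp G 2 μ) :
    Integrable (fun t => dotc m (F t) (G t)) μ :=
  integrable_finsetSum _ fun i _ => (hF.eval_piLp i).integrable_mul (hG.eval_piLp i).star

end MeasureTheory

lemma Continuous.dotc_locallyIntegrable {F ψ : ℝ → Em m}
    (hF : Continuous F) (hψ : LocallyIntegrable ψ μ) :
    LocallyIntegrable (fun t => dotc m (F t) (ψ t)) μ :=
  locallyIntegrable_finsetSum _ fun i _ => (hψ.conj_euclidean_apply i).continuous_mul (by fun_prop)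

theorem dotc_sub_dotc_eq_integral_of_eq_add_integral [SFinite μ] [NullSingletonClass μ]
    {φ ψ F G : ℝ → Em m} (hφ : LocallyIntegrable φ μ)
    (hψ : LocallyIntegrable ψ μ) {a b : ℝ} (hab : a ≤ b)
    (hF : ∀ x, F x = F a + ∫ t in a..x, φ t ∂μ) (hG : ∀ x, G x = G a + ∫ t in a..x, ψ t ∂μ) :
    dotc m (F b) (G b) - dotc m (F a) (G a) =
      ∫ t in a..b, (dotc m (φ t) (G t) + dotc m (F t) (ψ t)) ∂μ := by
  have hFc := continuous_of_forall_eq_add_integral hφ hF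
  have hGc := continuous_of_forall_eq_add_integral hψ hG
  have hcoord : ∀ i, F b i * conj (G b i) - F a i * conj (G a i) =
      ∫ t in a..b, (φ t i * conj (G t i) + F t i * conj (ψ t i)) ∂μ := fun i =>
    mul_sub_mul_eq_integral_of_eq_add_integral (F := fun x => F x i)
      (G := fun x => conj (G x i)) (hφ.euclidean_apply i)
      (hψ.conj_euclidean_apply i) hab
      (fun x => by
        rw [hF x, PiLp.add_apply, intervalIntegral_euclidean_apply (hφ.intervalIntegrable a x)])
      (fun x => by
        rw [hG x, PiLp.add_apply, map_add,
          intervalIntegral_euclidean_apply (hψ.intervalIntegrable a x),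
          intervalIntegral.intervalIntegral_conj])
  have hint : ∀ i ∈ Finset.univ, IntervalIntegrable
      (fun t => φ t i * conj (G t i) + F t i * conj (ψ t i)) μ a b := fun i _ =>
    (((hφ.euclidean_apply i).mul_continuous (by fun_prop)).add
      ((hψ.conj_euclidean_apply i).continuous_mul (by fun_prop))).intervalIntegrable a b
  simp only [dotc, ← Finset.sum_sub_distrib, hcoord, ← Finset.sum_add_distrib]
  exact (intervalIntegral.integral_finsetSum hint).symm

end Euclidean

section Potential

variable {m : ℕ} {Q s : ℝ → Matrix (Fin m) (Fin m) ℂ}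

lemma LocL2.locL1 (hQ : LocL2 m Q) : LocL1 m Q := fun i j =>
  locallyIntegrable_iff.2 fun K hK => by
    have : IsFiniteMeasure (volume.restrict K) := ⟨by simpa using hK.measure_lt_top⟩
    exact (hQ i j K hK).integrable one_le_two

lemma LocL2.locL1_sq (hQ : LocL2 m Q) : LocL1 m (fun t => Q t ^ 2) := fun i j =>
  locallyIntegrable_iff.2 fun K hK => by
    simp only [sq, Matrix.mul_apply]
    exact integrable_finsetSum _ fun k _ => (hQ i k K hK).integrable_mul (hQ k j K hK)

lemma LocL2.conjTranspose (hQ : LocL2 m Q) : LocL2 m (fun t => (Q t)ᴴ) := fun i j K hK =>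
  (hQ j i K hK).star

lemma LocL1.conjTranspose (hs : LocL1 m s) : LocL1 m (fun t => (s t)ᴴ) := fun i j =>
  Complex.conjCLE.toContinuousLinearMap.locallyIntegrable_comp (hs j i)

lemma LocL1.sub (hs : LocL1 m s) (hQ : LocL1 m Q) : LocL1 m (fun t => s t - Q t) := fun i j =>
  (hs i j).sub (hQ i j)

lemma LocL1.locallyIntegrable_mv (hs : LocL1 m s) {w : ℝ → Em m} (hw : Continuous w) :
    LocallyIntegrable (fun t => mv m (s t) (w t)) volume :=
  locallyIntegrable_of_euclidean_apply fun i =>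
    show LocallyIntegrable (fun t => ∑ j, s t i j * w t j) volume from
      locallyIntegrable_finsetSum _ fun j _ => (hs i j).mul_continuous (by fun_prop)

end Potential

section LagrangeIdentity

variable {m : ℕ} {Q s : ℝ → Matrix (Fin m) (Fin m) ℂ} {u u1 f v v1 g : ℝ → Em m}

lemma IsLpair.locallyIntegrable_integrands (hQ : LocL2 m Q) (hs : LocL1 m s)
    (hu : IsLpair m Q s u u1 f) :
    LocallyIntegrable (fun t => mv m (Q t) (u t) + u1 t) volume ∧
      LocallyIntegrable (fun t => mv m (s t - Q t ^ 2) (u t) - mv m (Q t) (u1 t) - f t) volume :=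
  let ⟨hf, hu, hu1, _⟩ := hu
  ⟨(hQ.locL1.locallyIntegrable_mv hu).add hu1.locallyIntegrable,
    (((hs.sub hQ.locL1_sq).locallyIntegrable_mv hu).sub (hQ.locL1.locallyIntegrable_mv hu1)).sub hf⟩

theorem IsLpair.bracket_sub_bracket_eq_integral (hQ : LocL2 m Q) (hs : LocL1 m s)
    (hu : IsLpair m Q s u u1 f) (hv : IsLplusPair m Q s v v1 g) {x y : ℝ} (hxy : x ≤ y) :
    (dotc m (u y) (v1 y) - dotc m (u1 y) (v y)) - (dotc m (u x) (v1 x) - dotc m (u1 x) (v x)) =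
      ∫ t in x..y, (dotc m (f t) (v t) - dotc m (u t) (g t)) := by
  obtain ⟨hφu, hφu1⟩ := hu.locallyIntegrable_integrands hQ hs
  obtain ⟨hφv, hφv1⟩ :=
    IsLpair.locallyIntegrable_integrands hQ.conjTranspose hs.conjTranspose hv
  obtain ⟨-, huc, hu1c, hu_eq, hu1_eq⟩ := hu
  obtain ⟨-, hvc, hv1c, hv_eq, hv1_eq⟩ := hv
  rw [sub_sub_sub_comm,
    dotc_sub_dotc_eq_integral_of_eq_add_integral hφu hφv1 hxy (hu_eq x) (hv1_eq x),
    dotc_sub_dotc_eq_integral_of_eq_add_integral hφu1 hφv hxy (hu1_eq x) (hv_eq x)]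
  refine (intervalIntegral.integral_sub ?_ ?_).symm.trans
    (intervalIntegral.integral_congr fun t _ => ?_)
  · exact ((hφu.dotc_continuous hv1c).add (huc.dotc_locallyIntegrable hφv1)).intervalIntegrable x y
  · exact ((hφu1.dotc_continuous hvc).add (hu1c.dotc_locallyIntegrable hφv)).intervalIntegrable x y
  simp only [← conjTranspose_pow, mv_sub, dotc_add_left, dotc_sub_left, dotc_add_right,
    dotc_sub_right, dotc_mv_left]
  ring

end LagrangeIdentity

theorem stmt5_general (m : ℕ) (Q s : ℝ → Matrix (Fin m) (Fin m) ℂ)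
    (hQ : LocL2 m Q) (hs : LocL1 m s)
    (u u1 f v v1 g : ℝ → Em m)
    (hu : IsLpair m Q s u u1 f) (hv : IsLplusPair m Q s v v1 g)
    (huL2 : MemLp u 2 (volume : Measure ℝ)) (hfL2 : MemLp f 2 (volume : Measure ℝ))
    (hvL2 : MemLp v 2 (volume : Measure ℝ)) (hgL2 : MemLp g 2 (volume : Measure ℝ)) :
    (∃ A : ℂ, Tendsto (fun t => dotc m (u t) (v1 t) - dotc m (u1 t) (v t)) atTop (𝓝 A)) ∧
    (∃ B : ℂ, Tendsto (fun t => dotc m (u t) (v1 t) - dotc m (u1 t) (v t)) atBot (𝓝 B)) :=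
  exists_tendsto_atTop_and_atBot_of_sub_eq_integral
    ((hfL2.integrable_dotc hvL2).sub (huL2.integrable_dotc hgL2))
    fun _ _ hxy => hu.bracket_sub_bracket_eq_integral hQ hs hv hxy

/-- Existence of the limits of the bracket `[u,v](t)` at `±∞`. -/
theorem stmt5 (m : ℕ) (hm : 1 ≤ m) (Q s : ℝ → Matrix (Fin m) (Fin m) ℂ)
    (hQ : LocL2 m Q) (hs : LocL1 m s)
    (u u1 f v v1 g : ℝ → Em m)
    (hu : IsLpair m Q s u u1 f) (hv : IsLplusPair m Q s v v1 g)
    (huL2 : MemLp u 2 (volume : Measure ℝ)) (hfL2 : MemLp f 2 (volume : Measure ℝ))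
    (hvL2 : MemLp v 2 (volume : Measure ℝ)) (hgL2 : MemLp g 2 (volume : Measure ℝ)) :
    (∃ A : ℂ, Tendsto (fun t => dotc m (u t) (v1 t) - dotc m (u1 t) (v t)) atTop (𝓝 A)) ∧
    (∃ B : ℂ, Tendsto (fun t => dotc m (u t) (v1 t) - dotc m (u1 t) (v t)) atBot (𝓝 B)) :=
  stmt5_general m Q s hQ hs u u1 f v v1 g hu hv huL2 hfL2 hvL2 hgL2
end
end

section
/- Let (v,v1) be an l⁺-pair with output 0 and let φ : ℝ → ℝ be smooth with compact support. Then, with v'(x) := Q(x)*·v(x) + v1(x), the following identity holds: ∫_ℝ (−φ''(x)·v(x) − 2φ'(x)·v'(x), φ(x)·v(x)) dx = ∫_ℝ φ'(x)²·(v(x),v(x)) dx + ∫_ℝ φ(x)·φ'(x)·[(v(x),v'(x)) − (v'(x),v(x))] dx. In particular, since (v,w) − (w,v) is purely imaginary, the real part of the left-hand side equals ∫_ℝ φ'(x)²·‖v(x)‖² dx. -/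
open MeasureTheory Matrix Filter Topology

noncomputable section

section helpers
open Set

lemma integrable_cc_mul {c f : ℝ → ℂ} (hc : Continuous c) (hcs : HasCompactSupport c)
    (hf : LocallyIntegrable f volume) : Integrable (fun x => c x * f x) volume := by
  have h1 : (tsupport c).indicator (fun x => c x • f x) = fun x => c x • f x := by
    apply Set.indicator_eq_self.2
    apply Function.support_subset_iff'.2
    intro x hx
    simp [image_eq_zero_of_notMem_tsupport hx]
  have h2 : Integrable (fun x => c x • f x) volume := by
    rw [← h1, Set.indicator_smul]
    exact Integrable.smul_of_top_right
      ((integrable_indicator_iff hcs.measurableSet).mpr (hf.integrableOn_isCompact hcs))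
      (hc.memLp_top_of_hasCompactSupport hcs _)
  simpa [smul_eq_mul] using h2

lemma locInt_mul_cont {f c : ℝ → ℂ} (hf : LocallyIntegrable f volume) (hc : Continuous c) :
    LocallyIntegrable (fun x => f x * c x) volume := by
  rw [locallyIntegrable_iff] at hf ⊢
  intro k hk
  exact (hf k hk).mul_continuousOn hc.continuousOn hk

lemma locInt_cont_mul {f c : ℝ → ℂ} (hf : LocallyIntegrable f volume) (hc : Continuous c) :
    LocallyIntegrable (fun x => c x * f x) volume := by
  rw [locallyIntegrable_iff] at hf ⊢
  intro k hk
  exact (hf k hk).continuousOn_mul hc.continuousOn hk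

lemma integrable_conj_comp {μ : Measure ℝ} {f : ℝ → ℂ} (hf : Integrable f μ) :
    Integrable (fun x => (starRingEnd ℂ) (f x)) μ := by
  refine Integrable.mono' hf.norm (Complex.continuous_conj.comp_aestronglyMeasurable hf.1) ?_
  filter_upwards with x
  simp

lemma locInt_conj {f : ℝ → ℂ} (hf : LocallyIntegrable f volume) :
    LocallyIntegrable (fun x => (starRingEnd ℂ) (f x)) volume := by
  rw [locallyIntegrable_iff] at hf ⊢
  intro k hk
  exact integrable_conj_comp (hf k hk)

lemma locL2_locInt {g : ℝ → ℂ} (h : ∀ K : Set ℝ, IsCompact K → MemLp g 2 (volume.restrict K)) :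
    LocallyIntegrable g volume := by
  rw [locallyIntegrable_iff]
  intro k hk
  haveI : IsFiniteMeasure (volume.restrict k) :=
    ⟨by rw [Measure.restrict_apply_univ]; exact hk.measure_lt_top⟩
  exact memLp_one_iff_integrable.mp ((h k hk).mono_exponent one_le_two)

lemma sum_single_eq {m : ℕ} (y : Em m) :
    ∑ i : Fin m, (y i) • (EuclideanSpace.single i (1:ℂ)) = y := by
  simpa using (EuclideanSpace.basisFun (Fin m) ℂ).sum_repr y

lemma integrable_of_coords {m : ℕ} {μ : Measure ℝ} {f : ℝ → Em m}
    (h : ∀ i, Integrable (fun x => f x i) μ) : Integrable f μ := by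
  have hrep : f = fun x => ∑ i : Fin m, (f x i) • (EuclideanSpace.single i (1:ℂ)) := by
    funext x
    exact (sum_single_eq (f x)).symm
  rw [hrep]
  exact integrable_finset_sum _ (fun i _ => (h i).smul_const _)

lemma triangle_swap {f g : ℝ → ℂ} {a b : ℝ} (hab : a ≤ b)
    (hf : IntegrableOn f (Set.Ioc a b) volume) (hg : IntegrableOn g (Set.Ioc a b) volume) :
    ∫ t in Set.Ioc a b, f t * ∫ s in Set.Ioc t b, g s
      = ∫ t in Set.Ioc a b, (∫ s in Set.Ioc a t, f s) * g t := by
  set T := Set.Ioc a b with hT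
  set F : ℝ × ℝ → ℂ := {p : ℝ × ℝ | p.1 < p.2}.indicator (fun p => f p.1 * g p.2) with hF
  have hmeas : MeasurableSet {p : ℝ × ℝ | p.1 < p.2} :=
    measurableSet_lt measurable_fst measurable_snd
  have hprod : Integrable (fun p : ℝ × ℝ => f p.1 * g p.2)
      ((volume.restrict T).prod (volume.restrict T)) := hf.mul_prod hg
  have hFint : Integrable F ((volume.restrict T).prod (volume.restrict T)) :=
    hprod.indicator hmeas
  have swap : ∫ t in T, (∫ s in T, F (t, s)) = ∫ s in T, (∫ t in T, F (t, s)) :=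
    integral_integral_swap hFint
  have L : ∫ t in T, (∫ s in T, F (t, s)) = ∫ t in T, f t * ∫ s in Set.Ioc t b, g s := by
    refine setIntegral_congr_fun measurableSet_Ioc (fun t ht => ?_)
    have h1 : (fun s => F (t, s)) = (Set.Ioi t).indicator (fun s => f t * g s) := by
      funext s
      by_cases h : t < s
      · simp [hF, Set.indicator_of_mem, h, Set.mem_Ioi, Set.mem_setOf_eq]
      · simp [hF, Set.indicator_of_notMem, h, Set.mem_Ioi, Set.mem_setOf_eq]
    rw [h1, integral_indicator measurableSet_Ioi, Measure.restrict_restrict measurableSet_Ioi]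
    have h2 : Set.Ioi t ∩ T = Set.Ioc t b := by
      rw [hT]
      ext s
      simp only [Set.mem_inter_iff, Set.mem_Ioi, Set.mem_Ioc]
      constructor
      · rintro ⟨h1', h2', h3'⟩; exact ⟨h1', h3'⟩
      · rintro ⟨h1', h2'⟩; exact ⟨h1', lt_trans ht.1 h1', h2'⟩
    rw [h2, integral_const_mul]
  have R : ∫ s in T, (∫ t in T, F (t, s)) = ∫ t in T, (∫ s in Set.Ioc a t, f s) * g t := by
    refine setIntegral_congr_fun measurableSet_Ioc (fun s hs => ?_)
    have h1 : (fun t => F (t, s)) = (Set.Iio s).indicator (fun t => f t * g s) := by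
      funext t
      by_cases h : t < s
      · simp [hF, Set.indicator_of_mem, h, Set.mem_Iio, Set.mem_setOf_eq]
      · simp [hF, Set.indicator_of_notMem, h, Set.mem_Iio, Set.mem_setOf_eq]
    rw [h1, integral_indicator measurableSet_Iio, Measure.restrict_restrict measurableSet_Iio]
    have h2 : Set.Iio s ∩ T = Set.Ioo a s := by
      rw [hT]
      ext t
      simp only [Set.mem_inter_iff, Set.mem_Iio, Set.mem_Ioc, Set.mem_Ioo]
      constructor
      · rintro ⟨h1', h2', h3'⟩; exact ⟨h2', h1'⟩
      · rintro ⟨h1', h2'⟩; exact ⟨h2', h1', le_trans (le_of_lt h2') hs.2⟩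
    rw [h2, integral_mul_const, ← integral_Ioc_eq_integral_Ioo]
  rw [← L, swap, R]

lemma locInt_integrableOn_Ioc {f : ℝ → ℂ} (hf : LocallyIntegrable f volume) {a b : ℝ} :
    IntegrableOn f (Set.Ioc a b) volume :=
  (hf.integrableOn_isCompact isCompact_Icc).mono_set Set.Ioc_subset_Icc_self

lemma prod_rule {u z f g : ℝ → ℂ} (hu : Continuous u) (hz : Continuous z)
    (hf : LocallyIntegrable f volume) (hg : LocallyIntegrable g volume)
    (hui : ∀ x y : ℝ, x ≤ y → u y = u x + ∫ t in Set.Ioc x y, f t)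
    (hzi : ∀ x y : ℝ, x ≤ y → z y = z x + ∫ t in Set.Ioc x y, g t)
    {a b : ℝ} (hab : a ≤ b) :
    u b * z b = u a * z a + ∫ t in Set.Ioc a b, (f t * z t + u t * g t) := by
  set T := Set.Ioc a b with hT
  have hfT : IntegrableOn f T volume := locInt_integrableOn_Ioc hf
  have hgT : IntegrableOn g T volume := locInt_integrableOn_Ioc hg
  have hfz : IntegrableOn (fun t => f t * z t) T volume :=
    ((hf.integrableOn_isCompact (isCompact_Icc (a := a) (b := b))).mul_continuousOn
      hz.continuousOn isCompact_Icc).mono_set Set.Ioc_subset_Icc_self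
  have hug : IntegrableOn (fun t => u t * g t) T volume :=
    ((hg.integrableOn_isCompact (isCompact_Icc (a := a) (b := b))).continuousOn_mul
      hu.continuousOn isCompact_Icc).mono_set Set.Ioc_subset_Icc_self
  have key : ∫ t in T, f t * (z b - z t) = ∫ t in T, (u t - u a) * g t := by
    have e1 : ∫ t in T, f t * (z b - z t) = ∫ t in T, f t * ∫ s in Set.Ioc t b, g s := by
      refine setIntegral_congr_fun measurableSet_Ioc (fun t ht => ?_)
      rw [hzi t b ht.2]
      ring
    have e2 : ∫ t in T, (u t - u a) * g t = ∫ t in T, (∫ s in Set.Ioc a t, f s) * g t := by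
      refine setIntegral_congr_fun measurableSet_Ioc (fun t ht => ?_)
      rw [hui a t (le_of_lt ht.1)]
      ring
    rw [e1, e2]
    exact triangle_swap hab hfT hgT
  have e1 : ∫ t in T, f t * (z b - z t) = (∫ t in T, f t) * z b - ∫ t in T, f t * z t := by
    rw [← integral_mul_const, ← integral_sub (hfT.mul_const _) hfz]
    congr 1
    funext t
    ring
  have e2 : ∫ t in T, (u t - u a) * g t = (∫ t in T, u t * g t) - u a * ∫ t in T, g t := by
    rw [← integral_const_mul, ← integral_sub hug (hgT.const_mul _)]
    congr 1
    funext t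
    ring
  have hadd : ∫ t in T, (f t * z t + u t * g t)
      = (∫ t in T, f t * z t) + ∫ t in T, u t * g t := integral_add hfz hug
  have hub := hui a b hab
  have hzb := hzi a b hab
  have key2 : (∫ t in T, f t) * z b - (∫ t in T, f t * z t)
      = (∫ t in T, u t * g t) - u a * ∫ t in T, g t := by
    rw [← e1, ← e2]; exact key
  rw [hadd]
  linear_combination z b * hub + u a * hzb + key2

lemma locInt_intervalIntegrable {f : ℝ → ℂ} (hf : LocallyIntegrable f volume) (a b : ℝ) :
    IntervalIntegrable f volume a b :=
  (hf.integrableOn_isCompact isCompact_uIcc).intervalIntegrable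

lemma parts {ψ : ℝ → ℝ} (hψ : ContDiff ℝ 1 ψ) (hψc : HasCompactSupport ψ)
    {h G : ℝ → ℂ} (hh : Continuous h) (hG : LocallyIntegrable G volume)
    (hint : ∀ x y : ℝ, x ≤ y → h y = h x + ∫ t in Set.Ioc x y, G t) :
    ∫ x : ℝ, ((deriv ψ x : ℝ) : ℂ) * h x = - ∫ x : ℝ, (ψ x : ℂ) * G x := by
  obtain ⟨r, hr⟩ := hψc.isBounded.subset_closedBall 0
  set R0 : ℝ := max r 0 with hR0
  set R : ℝ := R0 + 1 with hRdef
  have hsub0 : tsupport ψ ⊆ Set.Icc (-R0) R0 := by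
    refine subset_trans hr ?_
    rw [Real.closedBall_eq_Icc]
    apply Set.Icc_subset_Icc <;> simp [hR0] <;> linarith [le_max_left r 0]
  have h01 : (0:ℝ) ≤ R0 := le_max_right r 0
  have hRR : (-R : ℝ) ≤ R := by simp only [hRdef]; linarith
  have hzero : ∀ x : ℝ, x ∉ Set.Icc (-R0) R0 → ψ x = 0 := fun x hx =>
    image_eq_zero_of_notMem_tsupport (fun hmem => hx (hsub0 hmem))
  have hzero' : ∀ x : ℝ, x ∉ Set.Icc (-R0) R0 → deriv ψ x = 0 := fun x hx =>
    Function.notMem_support.mp (fun hs => hx (hsub0 (support_deriv_subset hs)))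
  have hout : ∀ x : ℝ, x ∉ Set.Icc (-R) R → x ∉ Set.Icc (-R0) R0 := by
    intro x hx hmem
    refine hx ⟨?_, ?_⟩
    · linarith [hmem.1]
    · linarith [hmem.2]
  have hψR : ψ R = 0 := hzero R (by
    intro hmem
    rw [Set.mem_Icc] at hmem
    simp only [hRdef] at hmem
    linarith [hmem.2])
  have hψnR : ψ (-R) = 0 := hzero (-R) (by
    intro hmem
    rw [Set.mem_Icc] at hmem
    simp only [hRdef] at hmem
    linarith [hmem.1])
  have hψd : Differentiable ℝ ψ := hψ.differentiable one_ne_zero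
  have hdc : Continuous (deriv ψ) := hψ.continuous_deriv le_rfl
  -- reduce to Ioc (-R) R
  set T := Set.Ioc (-R) R with hT
  have red1 : ∫ x : ℝ, ((deriv ψ x : ℝ) : ℂ) * h x = ∫ x in T, ((deriv ψ x : ℝ) : ℂ) * h x := by
    rw [hT, ← integral_Icc_eq_integral_Ioc]
    exact (setIntegral_eq_integral_of_forall_compl_eq_zero
      (fun x hx => by rw [hzero' x (hout x hx)]; simp)).symm
  have red2 : ∫ x : ℝ, (ψ x : ℂ) * G x = ∫ x in T, (ψ x : ℂ) * G x := by
    rw [hT, ← integral_Icc_eq_integral_Ioc]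
    exact (setIntegral_eq_integral_of_forall_compl_eq_zero
      (fun x hx => by rw [hzero x (hout x hx)]; simp)).symm
  rw [red1, red2]
  -- primitive
  have hGii : ∀ a b : ℝ, IntervalIntegrable G volume a b := locInt_intervalIntegrable hG
  set P : ℝ → ℂ := fun x => ∫ t in (-R)..x, G t with hP
  have hPc : Continuous P := intervalIntegral.continuous_primitive hGii (-R)
  have step2 : ∫ x in T, ((deriv ψ x : ℝ) : ℂ) * h x
      = ∫ x in T, ((deriv ψ x : ℝ) : ℂ) * (h (-R) + P x) := by
    refine setIntegral_congr_fun measurableSet_Ioc (fun x hx => ?_)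
    have hPx : P x = ∫ t in (-R)..x, G t := rfl
    rw [hint (-R) x hx.1.le, hPx, intervalIntegral.integral_of_le hx.1.le]
  have hcont1 : Continuous fun x : ℝ => ((deriv ψ x : ℝ) : ℂ) * h (-R) :=
    (Complex.continuous_ofReal.comp hdc).mul continuous_const
  have hcont2 : Continuous fun x : ℝ => ((deriv ψ x : ℝ) : ℂ) * P x :=
    (Complex.continuous_ofReal.comp hdc).mul hPc
  have step3 : ∫ x in T, ((deriv ψ x : ℝ) : ℂ) * (h (-R) + P x)
      = (∫ x in T, ((deriv ψ x : ℝ) : ℂ) * h (-R)) + ∫ x in T, ((deriv ψ x : ℝ) : ℂ) * P x := by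
    rw [← integral_add (hcont1.integrableOn_Icc.mono_set Set.Ioc_subset_Icc_self)
      (hcont2.integrableOn_Icc.mono_set Set.Ioc_subset_Icc_self)]
    congr 1
    funext x
    ring
  have piece1 : ∫ x in T, ((deriv ψ x : ℝ) : ℂ) * h (-R) = 0 := by
    rw [integral_mul_const]
    have hco : (∫ x in T, ((deriv ψ x : ℝ) : ℂ)) = ((∫ x in T, deriv ψ x : ℝ) : ℂ) :=
      integral_ofReal
    have : ∫ x in T, deriv ψ x = ∫ x in (-R)..R, deriv ψ x :=
      (intervalIntegral.integral_of_le hRR).symm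
    rw [hco, this, intervalIntegral.integral_deriv_eq_sub (fun x _ => hψd x)
      ((hdc.intervalIntegrable _ _)), hψR, hψnR]
    simp
  have piece2 : ∫ x in T, ((deriv ψ x : ℝ) : ℂ) * P x = - ∫ x in T, (ψ x : ℂ) * G x := by
    have e1 : ∫ x in T, ((deriv ψ x : ℝ) : ℂ) * P x
        = ∫ x in T, (∫ s in Set.Ioc (-R) x, G s) * (fun t : ℝ => ((deriv ψ t : ℝ) : ℂ)) x := by
      refine setIntegral_congr_fun measurableSet_Ioc (fun x hx => ?_)
      show ((deriv ψ x : ℝ) : ℂ) * P x = (∫ s in Set.Ioc (-R) x, G s) * ((deriv ψ x : ℝ) : ℂ)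
      have hPx : P x = ∫ t in (-R)..x, G t := rfl
      rw [hPx, intervalIntegral.integral_of_le hx.1.le]
      ring
    have e2 := triangle_swap (f := G) (g := fun t : ℝ => ((deriv ψ t : ℝ) : ℂ)) (a := -R) (b := R)
      hRR (locInt_integrableOn_Ioc hG)
      (((Complex.continuous_ofReal.comp hdc).integrableOn_Icc).mono_set Set.Ioc_subset_Icc_self)
    rw [e1, ← e2]
    have e3 : ∫ t in T, G t * ∫ s in Set.Ioc t R, ((deriv ψ s : ℝ) : ℂ)
        = ∫ t in T, -((ψ t : ℂ) * G t) := by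
      refine setIntegral_congr_fun measurableSet_Ioc (fun t ht => ?_)
      show G t * ∫ s in Set.Ioc t R, ((deriv ψ s : ℝ) : ℂ) = -(((ψ t : ℝ) : ℂ) * G t)
      have hco : (∫ s in Set.Ioc t R, ((deriv ψ s : ℝ) : ℂ))
          = ((∫ s in Set.Ioc t R, deriv ψ s : ℝ) : ℂ) := integral_ofReal
      have hval : ∫ s in Set.Ioc t R, deriv ψ s = ψ R - ψ t := by
        rw [← intervalIntegral.integral_of_le ht.2]
        exact intervalIntegral.integral_deriv_eq_sub (fun x _ => hψd x)
          ((hdc.intervalIntegrable _ _))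
      rw [hco, hval, hψR]
      push_cast
      ring
    rw [e3, integral_neg]
  rw [step2, step3, piece1, piece2, zero_add]


lemma dotc_smul_left {m : ℕ} (r : ℝ) (a b : Em m) :
    dotc m (r • a) b = (r : ℂ) * dotc m a b := by
  simp only [dotc, Finset.mul_sum, PiLp.smul_apply, Complex.real_smul]
  exact Finset.sum_congr rfl fun i _ => by ring

lemma dotc_smul_right {m : ℕ} (r : ℝ) (a b : Em m) :
    dotc m a (r • b) = (r : ℂ) * dotc m a b := by
  simp only [dotc, Finset.mul_sum, PiLp.smul_apply, Complex.real_smul]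
  refine Finset.sum_congr rfl fun i _ => ?_
  rw [_root_.map_mul, Complex.conj_ofReal]
  ring

lemma dotc_sub_left_s12 {m : ℕ} (a b c : Em m) :
    dotc m (a - b) c = dotc m a c - dotc m b c := by
  simp only [dotc, PiLp.sub_apply, sub_mul, Finset.sum_sub_distrib]

lemma dotc_conj {m : ℕ} (a b : Em m) :
    dotc m b a = (starRingEnd ℂ) (dotc m a b) := by
  simp only [dotc, map_sum]
  refine Finset.sum_congr rfl fun i _ => ?_
  rw [_root_.map_mul, Complex.conj_conj]
  ring

lemma dotc_self {m : ℕ} (a : Em m) : dotc m a a = ((‖a‖ ^ 2 : ℝ) : ℂ) := by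
  have h1 : ‖a‖ ^ 2 = ∑ i, Complex.normSq (a i) := by
    rw [EuclideanSpace.norm_eq, Real.sq_sqrt (Finset.sum_nonneg fun i _ => sq_nonneg _)]
    exact Finset.sum_congr rfl fun i _ => by rw [Complex.sq_norm]
  calc dotc m a a = ∑ i, ((Complex.normSq (a i) : ℝ) : ℂ) :=
        Finset.sum_congr rfl fun i _ => Complex.mul_conj _
    _ = ((∑ i, Complex.normSq (a i) : ℝ) : ℂ) := by push_cast; ring
    _ = ((‖a‖ ^ 2 : ℝ) : ℂ) := by rw [h1]

end helpers
set_option maxHeartbeats 1000000 in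
/-- The key integral identity for an l⁺-pair with output `0` against a real
smooth cutoff. -/
theorem stmt12 (m : ℕ) (hm : 1 ≤ m) (Q s : ℝ → Matrix (Fin m) (Fin m) ℂ)
    (hQ : LocL2 m Q) (hs : LocL1 m s)
    (v v1 : ℝ → Em m) (hv : IsLplusPair m Q s v v1 (fun _ => 0))
    (φ : ℝ → ℝ) (hφ : ContDiff ℝ (⊤ : ℕ∞) φ) (hφc : HasCompactSupport φ) :
    ((∫ x : ℝ, dotc m
        (-(deriv (deriv φ) x) • v x -
          (2 * deriv φ x) • (mv m (Q x)ᴴ (v x) + v1 x))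
        (φ x • v x)) =
      (∫ x : ℝ, (Complex.ofReal (deriv φ x)) ^ 2 * dotc m (v x) (v x)) +
      ∫ x : ℝ, Complex.ofReal (φ x * deriv φ x) *
        (dotc m (v x) (mv m (Q x)ᴴ (v x) + v1 x) -
          dotc m (mv m (Q x)ᴴ (v x) + v1 x) (v x))) ∧
    (∫ x : ℝ, dotc m
        (-(deriv (deriv φ) x) • v x -
          (2 * deriv φ x) • (mv m (Q x)ᴴ (v x) + v1 x))
        (φ x • v x)).re = ∫ x : ℝ, (deriv φ x) ^ 2 * ‖v x‖ ^ 2  := by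
  obtain ⟨-, hvc, hv1c, hvInt, -⟩ := hv
  set w : ℝ → Em m := fun t => mv m (Q t)ᴴ (v t) + v1 t with hwdef
  have hvic : ∀ i : Fin m, Continuous fun x => v x i :=
    fun i => (EuclideanSpace.proj (𝕜 := ℂ) i).continuous.comp hvc
  have hv1ic : ∀ i : Fin m, Continuous fun x => v1 x i :=
    fun i => (EuclideanSpace.proj (𝕜 := ℂ) i).continuous.comp hv1c
  have hQij : ∀ i j : Fin m, LocallyIntegrable (fun x => Q x i j) volume :=
    fun i j => locL2_locInt (fun K hK => hQ i j K hK)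
  have hwi_eq : ∀ i : Fin m, (fun x => w x i)
      = fun x => (∑ j, (starRingEnd ℂ) (Q x j i) * v x j) + v1 x i := by
    intro i
    funext x
    simp [hwdef, mv, Matrix.mulVec, dotProduct, Matrix.conjTranspose_apply,
      PiLp.add_apply]
  have hwiLoc : ∀ i : Fin m, LocallyIntegrable (fun x => w x i) volume := by
    intro i
    rw [hwi_eq i]
    refine LocallyIntegrable.add ?_ ((hv1ic i).locallyIntegrable)
    exact locallyIntegrable_finset_sum _
      (fun j _ => locInt_mul_cont (locInt_conj (hQij j i)) (hvic j))
  have hwII : ∀ a b : ℝ, IntervalIntegrable w volume a b := by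
    intro a b
    have h1 : IntegrableOn w (Set.uIcc a b) volume := by
      apply integrable_of_coords (μ := volume.restrict (Set.uIcc a b))
      intro i
      exact (hwiLoc i).integrableOn_isCompact isCompact_uIcc
    exact h1.intervalIntegrable
  have hui : ∀ (i : Fin m) (x y : ℝ), x ≤ y →
      v y i = v x i + ∫ t in Set.Ioc x y, w t i := by
    intro i x y hxy
    have h1 := congrArg (EuclideanSpace.proj (𝕜 := ℂ) i) (hvInt x y)
    rw [map_add, ← ContinuousLinearMap.intervalIntegral_comp_comm _ (hwII x y),
      intervalIntegral.integral_of_le hxy] at h1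
    simpa only [PiLp.proj_apply] using h1
  have hzi : ∀ (i : Fin m) (x y : ℝ), x ≤ y →
      (starRingEnd ℂ) (v y i) = (starRingEnd ℂ) (v x i)
        + ∫ t in Set.Ioc x y, (starRingEnd ℂ) (w t i) := by
    intro i x y hxy
    rw [hui i x y hxy, map_add, ← integral_conj]
  set A : ℝ → ℂ := fun x => dotc m (w x) (v x) with hAdef
  set B : ℝ → ℂ := fun x => dotc m (v x) (w x) with hBdef
  set h : ℝ → ℂ := fun x => dotc m (v x) (v x) with hhdef
  have hAloc : LocallyIntegrable A volume := by
    rw [hAdef]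
    simp only [dotc]
    exact locallyIntegrable_finset_sum _
      (fun i _ => locInt_mul_cont (hwiLoc i) (Complex.continuous_conj.comp (hvic i)))
  have hBloc : LocallyIntegrable B volume := by
    rw [hBdef]
    simp only [dotc]
    exact locallyIntegrable_finset_sum _
      (fun i _ => locInt_cont_mul (locInt_conj (hwiLoc i)) (hvic i))
  have hhc : Continuous h := by
    rw [hhdef]
    simp only [dotc]
    exact continuous_finset_sum _
      (fun i _ => (hvic i).mul (Complex.continuous_conj.comp (hvic i)))
  have hint : ∀ x y : ℝ, x ≤ y → h y = h x + ∫ t in Set.Ioc x y, (A t + B t) := by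
    intro x y hxy
    have hterm : ∀ i : Fin m, v y i * (starRingEnd ℂ) (v y i)
        = v x i * (starRingEnd ℂ) (v x i)
          + ∫ t in Set.Ioc x y, (w t i * (starRingEnd ℂ) (v t i)
              + v t i * (starRingEnd ℂ) (w t i)) :=
      fun i => prod_rule (hvic i) (Complex.continuous_conj.comp (hvic i)) (hwiLoc i)
        (locInt_conj (hwiLoc i)) (hui i) (hzi i) hxy
    have hIi : ∀ i : Fin m, IntegrableOn
        (fun t => w t i * (starRingEnd ℂ) (v t i) + v t i * (starRingEnd ℂ) (w t i))
        (Set.Ioc x y) volume := fun i =>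
      locInt_integrableOn_Ioc
        ((locInt_mul_cont (hwiLoc i) (Complex.continuous_conj.comp (hvic i))).add
          (locInt_cont_mul (locInt_conj (hwiLoc i)) (hvic i)))
    have e0 : h y = ∑ i, v y i * (starRingEnd ℂ) (v y i) := rfl
    have e1 : h x = ∑ i, v x i * (starRingEnd ℂ) (v x i) := rfl
    rw [e0, e1, Finset.sum_congr rfl (fun i _ => hterm i), Finset.sum_add_distrib,
      ← integral_finset_sum _ (fun i _ => hIi i)]
    congr 1
    refine setIntegral_congr_fun measurableSet_Ioc (fun t _ => ?_)
    have eA : A t = ∑ i, w t i * (starRingEnd ℂ) (v t i) := rfl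
    have eB : B t = ∑ i, v t i * (starRingEnd ℂ) (w t i) := rfl
    rw [eA, eB, ← Finset.sum_add_distrib]
  -- smoothness of φ
  have hφi : ContDiff ℝ ((⊤ : ℕ∞) : WithTop ℕ∞) φ := hφ.of_le (by simp)
  obtain ⟨hφd, hφ'⟩ := contDiff_infty_iff_deriv.mp hφi
  obtain ⟨hφd', hφ''⟩ := contDiff_infty_iff_deriv.mp hφ'
  have hφcc : Continuous φ := hφ.continuous
  have hφc' : Continuous (deriv φ) := hφ'.continuous
  have hφc'' : Continuous (deriv (deriv φ)) := hφ''.continuous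
  set ψ : ℝ → ℝ := fun x => φ x * deriv φ x with hψdef
  have hψ1 : ContDiff ℝ 1 ψ :=
    (hφi.of_le (mod_cast le_top)).mul (hφ'.of_le (mod_cast le_top))
  have hψcs : HasCompactSupport ψ := hφc.mul_right
  have hψd : ∀ x : ℝ, deriv ψ x = deriv φ x * deriv φ x + φ x * deriv (deriv φ) x := by
    intro x
    have : deriv ψ x = deriv (fun y => φ y * deriv φ y) x := rfl
    rw [this, deriv_fun_mul (hφd x) (hφd' x)]
  have hGloc : LocallyIntegrable (fun t => A t + B t) volume := hAloc.add hBloc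
  have hPARTS := parts hψ1 hψcs hhc hGloc hint
  -- coefficient functions
  have hc1 : Continuous fun x : ℝ => φ x * deriv (deriv φ) x := hφcc.mul hφc''
  have hcs1 : HasCompactSupport fun x : ℝ => φ x * deriv (deriv φ) x := hφc.mul_right
  have hc2 : Continuous fun x : ℝ => φ x * deriv φ x := hφcc.mul hφc'
  have hcs2 : HasCompactSupport fun x : ℝ => φ x * deriv φ x := hφc.mul_right
  have hc3 : Continuous fun x : ℝ => deriv φ x * deriv φ x := hφc'.mul hφc'
  have hcs3 : HasCompactSupport fun x : ℝ => deriv φ x * deriv φ x := hφc.deriv.mul_right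
  have ofRealCS : ∀ {p : ℝ → ℝ}, HasCompactSupport p →
      HasCompactSupport fun x => ((p x : ℝ) : ℂ) :=
    fun hp => hp.comp_left (g := Complex.ofReal) Complex.ofReal_zero
  have I1 : Integrable (fun x => ((φ x * deriv (deriv φ) x : ℝ) : ℂ) * h x) volume :=
    Continuous.integrable_of_hasCompactSupport
      ((Complex.continuous_ofReal.comp hc1).mul hhc) ((ofRealCS hcs1).mul_right)
  have I3 : Integrable (fun x => ((deriv φ x * deriv φ x : ℝ) : ℂ) * h x) volume :=
    Continuous.integrable_of_hasCompactSupport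
      ((Complex.continuous_ofReal.comp hc3).mul hhc) ((ofRealCS hcs3).mul_right)
  have IA : Integrable (fun x => ((φ x * deriv φ x : ℝ) : ℂ) * A x) volume :=
    integrable_cc_mul (Complex.continuous_ofReal.comp hc2) (ofRealCS hcs2) hAloc
  have IB : Integrable (fun x => ((φ x * deriv φ x : ℝ) : ℂ) * B x) volume :=
    integrable_cc_mul (Complex.continuous_ofReal.comp hc2) (ofRealCS hcs2) hBloc
  have keyL : ∫ x : ℝ, ((deriv ψ x : ℝ) : ℂ) * h x
      = (∫ x : ℝ, ((deriv φ x * deriv φ x : ℝ) : ℂ) * h x)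
        + ∫ x : ℝ, ((φ x * deriv (deriv φ) x : ℝ) : ℂ) * h x := by
    rw [← integral_add I3 I1]
    congr 1
    funext x
    rw [hψd x]
    push_cast
    ring
  have keyR : ∫ x : ℝ, ((ψ x : ℝ) : ℂ) * (A x + B x)
      = (∫ x : ℝ, ((φ x * deriv φ x : ℝ) : ℂ) * A x)
        + ∫ x : ℝ, ((φ x * deriv φ x : ℝ) : ℂ) * B x := by
    rw [← integral_add IA IB]
    congr 1
    funext x
    have : ψ x = φ x * deriv φ x := rfl
    rw [this]
    ring
  have KEY : (∫ x : ℝ, ((deriv φ x * deriv φ x : ℝ) : ℂ) * h x)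
      + (∫ x : ℝ, ((φ x * deriv (deriv φ) x : ℝ) : ℂ) * h x)
      = -((∫ x : ℝ, ((φ x * deriv φ x : ℝ) : ℂ) * A x)
          + ∫ x : ℝ, ((φ x * deriv φ x : ℝ) : ℂ) * B x) := by
    rw [← keyL, ← keyR]
    exact hPARTS
  have expand : ∀ x : ℝ, dotc m
      (-(deriv (deriv φ) x) • v x - (2 * deriv φ x) • (mv m (Q x)ᴴ (v x) + v1 x))
      (φ x • v x)
      = -(((φ x * deriv (deriv φ) x : ℝ) : ℂ) * h x)
        + (-2 : ℂ) * (((φ x * deriv φ x : ℝ) : ℂ) * A x) := by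
    intro x
    rw [dotc_sub_left_s12, dotc_smul_left, dotc_smul_left, dotc_smul_right, dotc_smul_right]
    have h1 : dotc m (v x) (v x) = h x := rfl
    have h2 : dotc m (mv m (Q x)ᴴ (v x) + v1 x) (v x) = A x := rfl
    rw [h1, h2]
    push_cast
    ring
  have L : (∫ x : ℝ, dotc m
      (-(deriv (deriv φ) x) • v x - (2 * deriv φ x) • (mv m (Q x)ᴴ (v x) + v1 x))
      (φ x • v x))
      = -(∫ x : ℝ, ((φ x * deriv (deriv φ) x : ℝ) : ℂ) * h x)
        + (-2 : ℂ) * ∫ x : ℝ, ((φ x * deriv φ x : ℝ) : ℂ) * A x := by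
    rw [show (fun x => dotc m
        (-(deriv (deriv φ) x) • v x - (2 * deriv φ x) • (mv m (Q x)ᴴ (v x) + v1 x))
        (φ x • v x))
        = fun x => -(((φ x * deriv (deriv φ) x : ℝ) : ℂ) * h x)
          + (-2 : ℂ) * (((φ x * deriv φ x : ℝ) : ℂ) * A x) from funext expand]
    have I1n : Integrable (fun x => -(((φ x * deriv (deriv φ) x : ℝ) : ℂ) * h x)) volume :=
      I1.neg
    have IAc : Integrable
        (fun x => (-2 : ℂ) * (((φ x * deriv φ x : ℝ) : ℂ) * A x)) volume :=
      IA.const_mul (-2)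
    rw [integral_add I1n IAc, integral_neg, integral_const_mul]
  have E3 : (∫ x : ℝ, (Complex.ofReal (deriv φ x)) ^ 2 * dotc m (v x) (v x))
      = ∫ x : ℝ, ((deriv φ x * deriv φ x : ℝ) : ℂ) * h x := by
    congr 1
    funext x
    have h1 : dotc m (v x) (v x) = h x := rfl
    rw [h1]
    push_cast
    ring
  have E2 : (∫ x : ℝ, Complex.ofReal (φ x * deriv φ x) *
        (dotc m (v x) (mv m (Q x)ᴴ (v x) + v1 x)
          - dotc m (mv m (Q x)ᴴ (v x) + v1 x) (v x)))
      = (∫ x : ℝ, ((φ x * deriv φ x : ℝ) : ℂ) * B x)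
        - ∫ x : ℝ, ((φ x * deriv φ x : ℝ) : ℂ) * A x := by
    rw [← integral_sub IB IA]
    congr 1
    funext x
    have h1 : dotc m (v x) (mv m (Q x)ᴴ (v x) + v1 x) = B x := rfl
    have h2 : dotc m (mv m (Q x)ᴴ (v x) + v1 x) (v x) = A x := rfl
    rw [h1, h2]
    ring
  have goal1 : (∫ x : ℝ, dotc m
      (-(deriv (deriv φ) x) • v x - (2 * deriv φ x) • (mv m (Q x)ᴴ (v x) + v1 x))
      (φ x • v x))
      = (∫ x : ℝ, (Complex.ofReal (deriv φ x)) ^ 2 * dotc m (v x) (v x)) +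
        ∫ x : ℝ, Complex.ofReal (φ x * deriv φ x) *
          (dotc m (v x) (mv m (Q x)ᴴ (v x) + v1 x)
            - dotc m (mv m (Q x)ᴴ (v x) + v1 x) (v x)) := by
    rw [L, E3, E2]
    linear_combination -KEY
  refine ⟨goal1, ?_⟩
  rw [goal1, E3, E2]
  have re1 : (∫ x : ℝ, ((deriv φ x * deriv φ x : ℝ) : ℂ) * h x)
      = ((∫ x : ℝ, (deriv φ x) ^ 2 * ‖v x‖ ^ 2 : ℝ) : ℂ) := by
    rw [show (fun x : ℝ => ((deriv φ x * deriv φ x : ℝ) : ℂ) * h x)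
        = fun x : ℝ => (((deriv φ x) ^ 2 * ‖v x‖ ^ 2 : ℝ) : ℂ) from funext fun x => by
      rw [show h x = ((‖v x‖ ^ 2 : ℝ) : ℂ) from dotc_self (v x)]
      push_cast
      ring]
    exact integral_ofReal
  have re2 : (∫ x : ℝ, ((φ x * deriv φ x : ℝ) : ℂ) * B x)
      - (∫ x : ℝ, ((φ x * deriv φ x : ℝ) : ℂ) * A x)
      = ((∫ x : ℝ, φ x * deriv φ x * (2 * (B x).im) : ℝ) : ℂ) * Complex.I := by
    rw [← integral_sub IB IA]
    rw [show (fun x : ℝ => ((φ x * deriv φ x : ℝ) : ℂ) * B x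
        - ((φ x * deriv φ x : ℝ) : ℂ) * A x)
        = fun x : ℝ => (((φ x * deriv φ x * (2 * (B x).im)) : ℝ) : ℂ) * Complex.I from
      funext fun x => by
        have hAB : A x = (starRingEnd ℂ) (B x) := dotc_conj (v x) (w x)
        rw [← mul_sub, hAB, Complex.sub_conj]
        push_cast
        ring]
    rw [integral_mul_const]
    congr 1
    exact integral_ofReal
  rw [re1, re2]
  simp
end
end

section
/- Let h : ℝ → [0,∞) be integrable. If there exists a constant C > 0 such that for every n ∈ ℕ: ∫_{-n}^{n} h(x) dx ≤ C² · ∫_{{x : n ≤ |x| ≤ n+1}} h(x) dx, then h = 0 almost everywhere. -/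
open MeasureTheory Matrix Filter Topology

noncomputable section

/- The partial integrals `aₙ = ∫_{-n}^{n} h` converge to `∫ h`, and the shell integral is
`aₙ₊₁ - aₙ`, which therefore tends to `0`; the hypothesis bounds `aₙ` by `C²` times it, so
`∫ h ≤ 0`, and a nonnegative function with vanishing integral is zero a.e. -/

theorem Real.setOf_le_abs_and_abs_le_eq (a b : ℝ) :
    {x : ℝ | a ≤ |x| ∧ |x| ≤ b} = Set.Icc (-b) b \ Set.Ioo (-a) a := by
  ext x
  simp only [Set.mem_ofPred_eq, Set.mem_sdiff, Set.mem_Icc, Set.mem_Ioo, abs_le, le_abs]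
  constructor
  · rintro ⟨hax | hax, hbx⟩
    · exact ⟨hbx, fun h => by linarith [h.2]⟩
    · exact ⟨hbx, fun h => by linarith [h.1]⟩
  · rintro ⟨hbx, hxa⟩
    refine ⟨?_, hbx⟩
    by_contra! hlt
    exact hxa ⟨by linarith [hlt.2], hlt.1⟩

theorem integral_setOf_le_abs_and_abs_le {f : ℝ → ℝ} (hf : Integrable f) {a b : ℝ}
    (ha : 0 ≤ a) (hab : a ≤ b) :
    ∫ x in {x : ℝ | a ≤ |x| ∧ |x| ≤ b}, f x =
      (∫ x in -b..b, f x) - ∫ x in -a..a, f x := by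
  rw [Real.setOf_le_abs_and_abs_le_eq, setIntegral_sdiff measurableSet_Ioo hf.integrableOn
      (Set.Ioo_subset_Icc_self.trans (Set.Icc_subset_Icc (by linarith) hab)),
    intervalIntegral.integral_of_le (by linarith), intervalIntegral.integral_of_le (by linarith),
    integral_Icc_eq_integral_Ioc, integral_Ioc_eq_integral_Ioo, integral_Ioc_eq_integral_Ioo]

theorem nonpos_of_tendsto_of_le_mul_sub {a : ℕ → ℝ} {L c : ℝ} (ha : Tendsto a atTop (𝓝 L))
    (hle : ∀ n, a n ≤ c * (a (n + 1) - a n)) : L ≤ 0 := by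
  have hdiff : Tendsto (fun n => c * (a (n + 1) - a n)) atTop (𝓝 0) := by
    simpa using ((ha.comp (tendsto_add_atTop_nat 1)).sub ha).const_mul c
  exact le_of_tendsto_of_tendsto' ha hdiff hle

theorem stmt14_general (h : ℝ → ℝ) (hnn : ∀ x : ℝ, 0 ≤ h x)
    (hint : Integrable h (volume : Measure ℝ))
    (C : ℝ)
    (hineq : ∀ n : ℕ, (∫ x in (-(n : ℝ))..(n : ℝ), h x) ≤
      C ^ 2 * ∫ x in {x : ℝ | (n : ℝ) ≤ |x| ∧ |x| ≤ (n : ℝ) + 1}, h x) :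
    h =ᵐ[volume] (0 : ℝ → ℝ) := by
  have hpartial : Tendsto (fun n : ℕ => ∫ x in (-(n : ℝ))..(n : ℝ), h x) atTop
      (𝓝 (∫ x, h x)) :=
    intervalIntegral_tendsto_integral hint
      (tendsto_neg_atTop_atBot.comp tendsto_natCast_atTop_atTop) tendsto_natCast_atTop_atTop
  have hshell : ∀ n : ℕ, (∫ x in (-(n : ℝ))..(n : ℝ), h x) ≤
      C ^ 2 * ((∫ x in (-((n + 1 : ℕ) : ℝ))..((n + 1 : ℕ) : ℝ), h x) -
        ∫ x in (-(n : ℝ))..(n : ℝ), h x) := fun n => by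
    have := hineq n
    rwa [integral_setOf_le_abs_and_abs_le hint n.cast_nonneg (by linarith), ← Nat.cast_succ]
      at this
  have hzero : ∫ x, h x = 0 :=
    (nonpos_of_tendsto_of_le_mul_sub hpartial hshell).antisymm (integral_nonneg hnn)
  exact (integral_eq_zero_iff_of_nonneg hnn hint).mp hzero

/-- An integrable nonnegative function satisfying
`∫_{-n}^{n} h ≤ C² ∫_{n ≤ |x| ≤ n+1} h` for all `n` vanishes a.e. -/
theorem stmt14 (h : ℝ → ℝ) (hnn : ∀ x : ℝ, 0 ≤ h x)
    (hint : Integrable h (volume : Measure ℝ))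
    (C : ℝ) (hC : 0 < C)
    (hineq : ∀ n : ℕ, (∫ x in (-(n : ℝ))..(n : ℝ), h x) ≤
      C ^ 2 * ∫ x in {x : ℝ | (n : ℝ) ≤ |x| ∧ |x| ≤ (n : ℝ) + 1}, h x) :
    h =ᵐ[volume] (0 : ℝ → ℝ) :=
  stmt14_general h hnn hint C hineq
end
end
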